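/- arXiv:1203.0949 — 3 statements merged into one kernel-verified Lean document; each statement's English description precedes it below -/
import Mathlib

section
/- Let τ be the unique solution of tan τ = τ in (π, 3π/2). Then for every a ≠ 0, the conjugate point (x_c, y_c) = E(τ/|a|, a) = (sin(aτ/|a|)/a, τ/(2a|a|) − sin(2aτ/|a|)/(4a²)) satisfies |y_c| = (x_c²/2)·(1/(cos τ · sin τ) − 1/τ). Hence the first conjugate locus from the origin of the Grushin plane is contained in the union of the two parabolas {(x,y) : y = ±(x²/2)(1/(cos τ sin τ) − 1/τ)}. -/
open Real

/-!
Since `tan τ = τ`, we have `sin τ = τ cos τ`, and this identity turns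
`sin² τ · (1/(cos τ sin τ) − 1/τ)` into `τ − sin τ cos τ`. On the other hand
`a · (τ/|a|) = ±τ`, so the conjugate point is `x_c = ± sin τ / a` and
`y_c = ±(τ − sin τ cos τ)/(2a²)` with the same sign; as `τ ≥ sin τ cos τ` for `τ ≥ 0`,
`|y_c| = (τ − sin τ cos τ)/(2a²) = (x_c²/2)·(1/(cos τ sin τ) − 1/τ)`.
-/

section TanEqSelf

variable {τ : ℝ}

lemma cos_ne_zero_of_tan_eq_self (htan : tan τ = τ) (hτ : τ ≠ 0) : cos τ ≠ 0 := fun hcos =>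
  hτ (by rw [← htan, tan_eq_sin_div_cos, hcos, div_zero])

lemma sin_eq_mul_cos_of_tan_eq_self (htan : tan τ = τ) (hτ : τ ≠ 0) : sin τ = τ * cos τ := by
  calc sin τ = sin τ / cos τ * cos τ :=
        (div_mul_cancel₀ _ (cos_ne_zero_of_tan_eq_self htan hτ)).symm
    _ = τ * cos τ := by rw [← tan_eq_sin_div_cos, htan]

lemma sin_sq_mul_parabola_coeff_of_tan_eq_self (htan : tan τ = τ) (hτ : τ ≠ 0) :
    sin τ ^ 2 * (1 / (cos τ * sin τ) - 1 / τ) = τ - sin τ * cos τ := by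
  have hcos := cos_ne_zero_of_tan_eq_self htan hτ
  have hsin := sin_eq_mul_cos_of_tan_eq_self htan hτ
  have hsin_ne : sin τ ≠ 0 := hsin ▸ mul_ne_zero hτ hcos
  field_simp
  linear_combination (τ - sin τ * cos τ) * hsin

end TanEqSelf

lemma sin_mul_cos_le_self {t : ℝ} (ht : 0 ≤ t) : sin t * cos t ≤ t := by
  have := sin_le (by linarith : 0 ≤ 2 * t)
  rw [sin_two_mul] at this
  linarith

lemma sin_mul_div_abs (a t : ℝ) : sin (a * (t / |a|)) = a / |a| * sin t := by
  rcases lt_trichotomy a 0 with ha | rfl | ha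
  · have : a * (t / |a|) = -t := by
      rw [abs_of_neg ha, div_neg, mul_neg, mul_div_cancel₀ _ ha.ne]
    rw [this, sin_neg, abs_of_neg ha, div_neg, div_self ha.ne, neg_one_mul]
  · simp
  · have : a * (t / |a|) = t := by rw [abs_of_pos ha, mul_div_cancel₀ _ ha.ne']
    rw [this, abs_of_pos ha, div_self ha.ne', one_mul]

section ConjugatePoint

variable {a : ℝ}

lemma sq_sin_mul_div_abs_div (ha : a ≠ 0) (t : ℝ) :
    (sin (a * (t / |a|)) / a) ^ 2 = sin t ^ 2 / a ^ 2 := by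
  have habs : |a| ≠ 0 := abs_ne_zero.mpr ha
  rw [sin_mul_div_abs]
  field_simp
  rw [sq_abs]

lemma abs_conjugate_point_snd (ha : a ≠ 0) {t : ℝ} (ht : 0 ≤ t) :
    |t / (2 * a * |a|) - sin (2 * a * (t / |a|)) / (4 * a ^ 2)|
      = (t - sin t * cos t) / (2 * a ^ 2) := by
  have habs : |a| ≠ 0 := abs_ne_zero.mpr ha
  have hsnd : t / (2 * a * |a|) - sin (2 * a * (t / |a|)) / (4 * a ^ 2)
      = a / |a| * ((t - sin t * cos t) / (2 * a ^ 2)) := by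
    rw [show 2 * a * (t / |a|) = a * (2 * t / |a|) by ring, sin_mul_div_abs, sin_two_mul]
    field_simp
    ring
  rw [hsnd, abs_mul, abs_div, abs_abs, div_self habs, one_mul,
    abs_of_nonneg (div_nonneg (sub_nonneg.mpr (sin_mul_cos_le_self ht)) (by positivity))]

end ConjugatePoint

/-- with `τ` the unique solution of `tan τ = τ` in `(π, 3π/2)`, the
conjugate point `(x_c, y_c) = E(τ/|a|, a)` satisfies
`|y_c| = (x_c²/2)(1/(cos τ sin τ) − 1/τ)`; hence it lies on the union of the two
parabolas `y = ±(x²/2)(1/(cos τ sin τ) − 1/τ)`. -/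
theorem grushin_conjugate_locus_parabolas (τ : ℝ)
    (hτ : τ ∈ Set.Ioo π (3 * π / 2)) (htan : tan τ = τ)
    (a : ℝ) (ha : a ≠ 0) (xc yc : ℝ)
    (hxc : xc = sin (a * (τ / |a|)) / a)
    (hyc : yc = τ / (2 * a * |a|) - sin (2 * a * (τ / |a|)) / (4 * a ^ 2)) :
    |yc| = xc ^ 2 / 2 * (1 / (cos τ * sin τ) - 1 / τ) ∧
    ((xc, yc) : ℝ × ℝ) ∈
      {p : ℝ × ℝ | p.2 = p.1 ^ 2 / 2 * (1 / (cos τ * sin τ) - 1 / τ)} ∪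
      {p : ℝ × ℝ | p.2 = -(p.1 ^ 2 / 2 * (1 / (cos τ * sin τ) - 1 / τ))} := by
  have hτ_pos : 0 < τ := pi_pos.trans hτ.1
  have habs_yc : |yc| = xc ^ 2 / 2 * (1 / (cos τ * sin τ) - 1 / τ) := by
    rw [hyc, abs_conjugate_point_snd ha hτ_pos.le, hxc, sq_sin_mul_div_abs_div ha,
      ← sin_sq_mul_parabola_coeff_of_tan_eq_self htan hτ_pos.ne']
    ring
  exact ⟨habs_yc, eq_or_eq_neg_of_abs_eq habs_yc⟩
end

section
/- The Grushin distance d is finite for every pair of points of ℝ², defines a metric on ℝ² (d(p,q) = 0 iff p = q, d is symmetric, and the triangle inequality holds), and the topology induced by d on ℝ² coincides with the Euclidean topology. -/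
open Real MeasureTheory

/-- The set of lengths of admissible curves of the Grushin plane joining `p` to `q`:
absolutely continuous curves `γ` with `γ̇₁ = u`, `γ̇₂ = γ₁·v` a.e. for measurable,
essentially bounded controls `u, v`, with length `∫₀ᵀ √(u² + v²)`. -/
noncomputable def grushinLengths (p q : ℝ × ℝ) : Set ℝ :=
  {L | ∃ (T : ℝ) (u v : ℝ → ℝ) (γ : ℝ → ℝ × ℝ),
    0 ≤ T ∧ Measurable u ∧ Measurable v ∧
    (∃ C : ℝ, ∀ t ∈ Set.Icc (0 : ℝ) T, |u t| ≤ C ∧ |v t| ≤ C) ∧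
    γ 0 = p ∧ γ T = q ∧
    (∀ t ∈ Set.Icc (0 : ℝ) T, (γ t).1 = p.1 + ∫ s in (0 : ℝ)..t, u s) ∧
    (∀ t ∈ Set.Icc (0 : ℝ) T, (γ t).2 = p.2 + ∫ s in (0 : ℝ)..t, (γ s).1 * v s) ∧
    L = ∫ t in (0 : ℝ)..T, Real.sqrt (u t ^ 2 + v t ^ 2)}

/-- The Grushin (Carnot–Carathéodory) distance on `ℝ²`. -/
noncomputable def grushinDist (p q : ℝ × ℝ) : ℝ := sInf (grushinLengths p q)

/-!
Admissible curves can be concatenated and run backwards, so the set of lengths is closed under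
addition and symmetric in `p, q`; this gives symmetry and the triangle inequality. The field
`x ∂_y` moves vertically at speed `|x|`, so `q` is reached from `p` by a horizontal segment to a
line `x = s ≠ 0`, a vertical one of length `|Δy| / |s|` and a horizontal one back; with `|s|` of
order `ε` this costs less than `ε` when `q` is Euclidean-close to `p`. Conversely, along a curve
of length `L` the first coordinate moves by at most `L`, so `|γ₁| ≤ |p₁| + L` and the second
coordinate moves by at most `(|p₁| + L) L`: a small Grushin distance forces Euclidean closeness,
and in particular `d(p, q) = 0` forces `p = q`.
-/

open Set intervalIntegral
open scoped Pointwise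

namespace Grushin

section Primitives

variable {f g F : ℝ → ℝ} {a b x₀ t T C : ℝ}

lemma intervalIntegrable_of_abs_le (hab : a ≤ b) (hf : Measurable f)
    (hC : ∀ t ∈ Icc a b, |f t| ≤ C) : IntervalIntegrable f volume a b :=
  intervalIntegrable_const.mono_fun' hf.aestronglyMeasurable <|
    (ae_restrict_iff' measurableSet_uIoc).2 <| .of_forall fun t ht =>
      hC t (Ioc_subset_Icc_self (uIoc_of_le hab ▸ ht))

lemma abs_integral_le_of_abs_le (ht : t ∈ Icc 0 T) (hfg : ∀ s ∈ Icc 0 T, |f s| ≤ g s)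
    (hg : IntervalIntegrable g volume 0 T) : |∫ s in 0..t, f s| ≤ ∫ s in 0..T, g s := by
  have hg_nonneg : ∀ s ∈ Icc 0 T, 0 ≤ g s := fun s hs => (abs_nonneg _).trans (hfg s hs)
  calc |∫ s in 0..t, f s| ≤ ∫ s in 0..t, g s :=
        intervalIntegral.norm_integral_le_of_norm_le (f := f) ht.1
          (.of_forall fun s hs => hfg s ⟨hs.1.le, hs.2.trans ht.2⟩)
          (hg.mono_set (uIcc_subset_uIcc_left (Icc_subset_uIcc ht)))
    _ ≤ ∫ s in 0..T, g s := integral_mono_interval le_rfl ht.1 ht.2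
        ((ae_restrict_iff' measurableSet_Ioc).2 (.of_forall fun s hs =>
          hg_nonneg s (Ioc_subset_Icc_self hs))) hg

lemma continuousOn_of_eq_primitive (hT : 0 ≤ T)
    (hF : ∀ t ∈ Icc 0 T, F t = x₀ + ∫ s in 0..t, f s) (hf : IntervalIntegrable f volume 0 T) :
    ContinuousOn F (Icc 0 T) := by
  have h := (continuousOn_primitive_interval' hf left_mem_uIcc).const_add x₀
  rw [uIcc_of_le hT] at h
  exact h.congr hF

lemma eq_primitive_reverse (hT : 0 ≤ T) (hF : ∀ t ∈ Icc 0 T, F t = x₀ + ∫ s in 0..t, f s)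
    (hf : IntervalIntegrable f volume 0 T) :
    ∀ t ∈ Icc 0 T, F (T - t) = F T + ∫ s in 0..t, -f (T - s) := by
  intro t ht
  have hTt : T - t ∈ Icc 0 T := ⟨by linarith [ht.2], by linarith [ht.1]⟩
  rw [intervalIntegral.integral_neg, integral_comp_sub_left, sub_zero, hF _ hTt,
    hF T ⟨hT, le_rfl⟩, ← integral_interval_sub_left hf
      (hf.mono_set (uIcc_subset_uIcc_left (Icc_subset_uIcc hTt)))]
  ring

end Primitives

section Concat

variable {α β γ : Type*} {T₁ t : ℝ}

noncomputable def concatAt (T₁ : ℝ) (f₁ f₂ : ℝ → α) (t : ℝ) : α :=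
  if t ≤ T₁ then f₁ t else f₂ (t - T₁)

variable {f₁ f₂ : ℝ → α}

lemma concatAt_of_le (h : t ≤ T₁) : concatAt T₁ f₁ f₂ t = f₁ t := if_pos h

lemma concatAt_of_lt (h : T₁ < t) : concatAt T₁ f₁ f₂ t = f₂ (t - T₁) := if_neg h.not_ge

lemma concatAt_add (hf : f₁ T₁ = f₂ 0) (ht : 0 ≤ t) : concatAt T₁ f₁ f₂ (T₁ + t) = f₂ t := by
  rcases ht.eq_or_lt with rfl | ht
  · rw [add_zero, concatAt_of_le le_rfl, hf]
  · rw [concatAt_of_lt (lt_add_of_pos_right T₁ ht), add_sub_cancel_left]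

lemma map_concatAt (g : α → β) (t : ℝ) :
    g (concatAt T₁ f₁ f₂ t) = concatAt T₁ (fun s => g (f₁ s)) (fun s => g (f₂ s)) t := by
  unfold concatAt; split_ifs <;> rfl

lemma map₂_concatAt (g : α → β → γ) {g₁ g₂ : ℝ → β} (t : ℝ) :
    g (concatAt T₁ f₁ f₂ t) (concatAt T₁ g₁ g₂ t) =
      concatAt T₁ (fun s => g (f₁ s) (g₁ s)) (fun s => g (f₂ s) (g₂ s)) t := by
  unfold concatAt; split_ifs <;> rfl

lemma measurable_concatAt [MeasurableSpace α] (h₁ : Measurable f₁) (h₂ : Measurable f₂) :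
    Measurable (concatAt T₁ f₁ f₂) :=
  Measurable.ite measurableSet_Iic h₁ (h₂.comp (measurable_id.sub_const T₁))

end Concat

section ConcatIntegral

variable {f₁ f₂ F₁ F₂ : ℝ → ℝ} {x₀ t T₁ T₂ : ℝ}

lemma integral_concatAt (hT₁ : 0 ≤ T₁) (ht : T₁ ≤ t) (hf₁ : IntervalIntegrable f₁ volume 0 T₁)
    (hf₂ : IntervalIntegrable f₂ volume 0 (t - T₁)) :
    ∫ s in 0..t, concatAt T₁ f₁ f₂ s = (∫ s in 0..T₁, f₁ s) + ∫ s in 0..(t - T₁), f₂ s := by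
  have h₁ : EqOn (concatAt T₁ f₁ f₂) f₁ (uIcc 0 T₁) := fun s hs =>
    concatAt_of_le (by rw [uIcc_of_le hT₁] at hs; exact hs.2)
  have h₂ : EqOn (concatAt T₁ f₁ f₂) (fun s => f₂ (s - T₁)) (uIoc T₁ t) := fun s hs =>
    concatAt_of_lt (by rw [uIoc_of_le ht] at hs; exact hs.1)
  have hf₂' : IntervalIntegrable (fun s => f₂ (s - T₁)) volume T₁ t := by
    simpa using hf₂.comp_sub_right T₁
  rw [← integral_add_adjacent_intervals (hf₁.congr (h₁.symm.mono uIoc_subset_uIcc))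
    (hf₂'.congr h₂.symm), integral_congr h₁, integral_congr_ae (.of_forall fun s hs => h₂ hs),
    integral_comp_sub_right, sub_self]

lemma concatAt_eq_primitive (hT₁ : 0 ≤ T₁)
    (hF₁ : ∀ t ∈ Icc 0 T₁, F₁ t = x₀ + ∫ s in 0..t, f₁ s)
    (hF₂ : ∀ t ∈ Icc 0 T₂, F₂ t = F₁ T₁ + ∫ s in 0..t, f₂ s)
    (hf₁ : IntervalIntegrable f₁ volume 0 T₁) (hf₂ : IntervalIntegrable f₂ volume 0 T₂) :
    ∀ t ∈ Icc 0 (T₁ + T₂), concatAt T₁ F₁ F₂ t = x₀ + ∫ s in 0..t, concatAt T₁ f₁ f₂ s := by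
  intro t ht
  rcases le_or_gt t T₁ with h | h
  · rw [concatAt_of_le h, hF₁ t ⟨ht.1, h⟩]
    congr 1
    refine integral_congr fun s hs => (concatAt_of_le ?_).symm
    rw [uIcc_of_le ht.1] at hs
    exact hs.2.trans h
  · have htT : t - T₁ ∈ Icc 0 T₂ := ⟨by linarith, by linarith [ht.2]⟩
    rw [concatAt_of_lt h, hF₂ _ htT, hF₁ T₁ ⟨hT₁, le_rfl⟩, integral_concatAt hT₁ h.le hf₁
      (hf₂.mono_set (uIcc_subset_uIcc_left (Icc_subset_uIcc htT))), add_assoc]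

end ConcatIntegral

section Lengths

variable {p q r : ℝ × ℝ} {L L₁ L₂ : ℝ}

lemma intervalIntegrable_of_admissible {T C : ℝ} {u v : ℝ → ℝ} {γ : ℝ → ℝ × ℝ} (hT : 0 ≤ T)
    (hu : Measurable u) (hv : Measurable v) (hC : ∀ t ∈ Icc 0 T, |u t| ≤ C ∧ |v t| ≤ C)
    (hx : ∀ t ∈ Icc 0 T, (γ t).1 = p.1 + ∫ s in 0..t, u s) :
    IntervalIntegrable u volume 0 T ∧ IntervalIntegrable (fun s => (γ s).1 * v s) volume 0 T ∧
      IntervalIntegrable (fun t => √(u t ^ 2 + v t ^ 2)) volume 0 T := by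
  have hu' := intervalIntegrable_of_abs_le hT hu fun t ht => (hC t ht).1
  have hv' := intervalIntegrable_of_abs_le hT hv fun t ht => (hC t ht).2
  refine ⟨hu', hv'.continuousOn_mul ?_,
    intervalIntegrable_of_abs_le (C := 2 * C) hT (by fun_prop) fun t ht => ?_⟩
  · rw [uIcc_of_le hT]
    exact continuousOn_of_eq_primitive hT hx hu'
  · obtain ⟨hut, hvt⟩ := hC t ht
    rw [abs_of_nonneg (sqrt_nonneg _), sqrt_le_iff]
    constructor
    · linarith [abs_nonneg (u t)]
    · nlinarith [sq_abs (u t), sq_abs (v t), abs_nonneg (u t), abs_nonneg (v t)]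

lemma horizontal_mem_grushinLengths (x x' y : ℝ) : |x' - x| ∈ grushinLengths (x, y) (x', y) := by
  refine ⟨1, fun _ => x' - x, fun _ => 0, fun t => (x + t * (x' - x), y), zero_le_one,
    measurable_const, measurable_const, ⟨|x' - x|, fun t _ => ⟨le_rfl, by simp⟩⟩, by simp,
    by norm_num, fun t _ => ?_, fun t _ => by simp, by simp [sqrt_sq_eq_abs]⟩
  simp only [intervalIntegral.integral_const, smul_eq_mul]
  ring

lemma vertical_mem_grushinLengths {s : ℝ} (hs : s ≠ 0) (y y' : ℝ) :
    |y' - y| / |s| ∈ grushinLengths (s, y) (s, y') := by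
  refine ⟨1, fun _ => 0, fun _ => (y' - y) / s, fun t => (s, y + t * (y' - y)), zero_le_one,
    measurable_const, measurable_const, ⟨|(y' - y) / s|, fun t _ => ⟨by simp, le_rfl⟩⟩,
    by simp, by norm_num, fun t _ => by simp, fun t _ => ?_, by simp [sqrt_sq_eq_abs, abs_div]⟩
  simp only [intervalIntegral.integral_const, smul_eq_mul, mul_div_cancel₀ _ hs]
  ring

lemma add_mem_grushinLengths (h₁ : L₁ ∈ grushinLengths p q) (h₂ : L₂ ∈ grushinLengths q r) :
    L₁ + L₂ ∈ grushinLengths p r := by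
  obtain ⟨T₁, u₁, v₁, γ₁, hT₁, hu₁, hv₁, ⟨C₁, hC₁⟩, rfl, rfl, hx₁, hy₁, rfl⟩ := h₁
  obtain ⟨T₂, u₂, v₂, γ₂, hT₂, hu₂, hv₂, ⟨C₂, hC₂⟩, h₂0, rfl, hx₂, hy₂, rfl⟩ := h₂
  obtain ⟨hu₁', hw₁, hg₁⟩ := intervalIntegrable_of_admissible hT₁ hu₁ hv₁ hC₁ hx₁
  obtain ⟨hu₂', hw₂, hg₂⟩ := intervalIntegrable_of_admissible hT₂ hu₂ hv₂ hC₂ hx₂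
  refine ⟨T₁ + T₂, concatAt T₁ u₁ u₂, concatAt T₁ v₁ v₂, concatAt T₁ γ₁ γ₂, by positivity,
    measurable_concatAt hu₁ hu₂, measurable_concatAt hv₁ hv₂, ⟨max C₁ C₂, fun t ht => ?_⟩,
    concatAt_of_le hT₁, concatAt_add h₂0.symm hT₂, fun t ht => ?_, fun t ht => ?_, ?_⟩
  · rcases le_or_gt t T₁ with h | h
    · rw [concatAt_of_le h, concatAt_of_le h]
      exact (hC₁ t ⟨ht.1, h⟩).imp le_max_of_le_left le_max_of_le_left
    · rw [concatAt_of_lt h, concatAt_of_lt h]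
      exact (hC₂ _ ⟨by linarith, by linarith [ht.2]⟩).imp le_max_of_le_right le_max_of_le_right
  · rw [map_concatAt Prod.fst]
    exact concatAt_eq_primitive hT₁ hx₁ hx₂ hu₁' hu₂' t ht
  · simp only [map_concatAt Prod.snd, map_concatAt Prod.fst, map₂_concatAt (· * ·)]
    exact concatAt_eq_primitive hT₁ hy₁ hy₂ hw₁ hw₂ t ht
  · simp only [map₂_concatAt fun a b : ℝ => √(a ^ 2 + b ^ 2)]
    rw [integral_concatAt hT₁ (le_add_of_nonneg_right hT₂) hg₁ (by rwa [add_sub_cancel_left]),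
      add_sub_cancel_left]

lemma mem_grushinLengths_symm (h : L ∈ grushinLengths p q) : L ∈ grushinLengths q p := by
  obtain ⟨T, u, v, γ, hT, hu, hv, ⟨C, hC⟩, rfl, rfl, hx, hy, rfl⟩ := h
  obtain ⟨hu', hw, -⟩ := intervalIntegrable_of_admissible hT hu hv hC hx
  refine ⟨T, fun t => -u (T - t), fun t => -v (T - t), fun t => γ (T - t), hT, by fun_prop,
    by fun_prop, ⟨C, fun t ht => ?_⟩, by simp, by simp,
    eq_primitive_reverse hT hx hu', fun t ht => ?_, ?_⟩
  · simpa only [abs_neg] using hC (T - t) ⟨by linarith [ht.2], by linarith [ht.1]⟩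
  · simp only [mul_neg]
    exact eq_primitive_reverse hT hy hw t ht
  · simp only [neg_sq]
    rw [integral_comp_sub_left (fun s => √(u s ^ 2 + v s ^ 2)), sub_self, sub_zero]

lemma nonneg_of_mem_grushinLengths (h : L ∈ grushinLengths p q) : 0 ≤ L := by
  obtain ⟨T, -, -, -, hT, -, -, -, -, -, -, -, rfl⟩ := h
  exact intervalIntegral.integral_nonneg hT fun t _ => sqrt_nonneg _

lemma dist_le_of_mem_grushinLengths (h : L ∈ grushinLengths p q) :
    dist p q ≤ (1 + |p.1| + L) * L := by
  have hL₀ := nonneg_of_mem_grushinLengths h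
  obtain ⟨T, u, v, γ, hT, hu, hv, ⟨C, hC⟩, rfl, rfl, hx, hy, hL⟩ := h
  obtain ⟨-, hw, hg⟩ := intervalIntegrable_of_admissible hT hu hv hC hx
  have hx_le : ∀ t ∈ Icc 0 T, |(γ t).1 - (γ 0).1| ≤ L := fun t ht => by
    rw [hx t ht, add_sub_cancel_left, hL]
    exact abs_integral_le_of_abs_le ht
      (fun s _ => abs_le_sqrt (le_add_of_nonneg_right (sq_nonneg _))) hg
  have hy_le : |(γ T).2 - (γ 0).2| ≤ (|(γ 0).1| + L) * L := by
    rw [hy T ⟨hT, le_rfl⟩, add_sub_cancel_left, hL, ← intervalIntegral.integral_const_mul, ← hL]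
    refine abs_integral_le_of_abs_le ⟨hT, le_rfl⟩ (fun s hs => ?_) (hg.const_mul _)
    rw [abs_mul]
    refine mul_le_mul ?_ (abs_le_sqrt (le_add_of_nonneg_left (sq_nonneg _))) (abs_nonneg _)
      (by positivity)
    linarith [abs_sub_abs_le_abs_sub (γ s).1 (γ 0).1, hx_le s hs]
  have hx_T := hx_le T ⟨hT, le_rfl⟩
  rw [Prod.dist_eq, Real.dist_eq, Real.dist_eq, abs_sub_comm, abs_sub_comm (γ 0).2]
  exact max_le (by nlinarith [abs_nonneg (γ 0).1]) (by nlinarith)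

end Lengths

section Distance

variable {p q : ℝ × ℝ} {L : ℝ}

lemma zero_mem_grushinLengths (p : ℝ × ℝ) : 0 ∈ grushinLengths p p := by
  simpa using horizontal_mem_grushinLengths p.1 p.1 p.2

lemma three_segments_mem_grushinLengths (p q : ℝ × ℝ) {s : ℝ} (hs : s ≠ 0) :
    |s - p.1| + |q.2 - p.2| / |s| + |q.1 - s| ∈ grushinLengths p q :=
  add_mem_grushinLengths (add_mem_grushinLengths (horizontal_mem_grushinLengths p.1 s p.2)
    (vertical_mem_grushinLengths hs p.2 q.2)) (horizontal_mem_grushinLengths s q.1 q.2)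

lemma grushinLengths_nonempty (p q : ℝ × ℝ) : (grushinLengths p q).Nonempty :=
  ⟨_, three_segments_mem_grushinLengths p q (s := |p.1| + 1) (by positivity)⟩

lemma bddBelow_grushinLengths : BddBelow (grushinLengths p q) :=
  ⟨0, fun _ => nonneg_of_mem_grushinLengths⟩

lemma grushinDist_le (h : L ∈ grushinLengths p q) : grushinDist p q ≤ L :=
  csInf_le bddBelow_grushinLengths h

lemma exists_mem_grushinLengths_lt (h : grushinDist p q < L) : ∃ L' ∈ grushinLengths p q, L' < L :=
  exists_lt_of_csInf_lt (grushinLengths_nonempty p q) h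

lemma grushinDist_nonneg : 0 ≤ grushinDist p q :=
  le_csInf (grushinLengths_nonempty p q) fun _ => nonneg_of_mem_grushinLengths

lemma grushinDist_self (p : ℝ × ℝ) : grushinDist p p = 0 :=
  (grushinDist_le (zero_mem_grushinLengths p)).antisymm grushinDist_nonneg

lemma grushinDist_comm (p q : ℝ × ℝ) : grushinDist p q = grushinDist q p := by
  rw [grushinDist, grushinDist, Set.ext fun _ => ⟨mem_grushinLengths_symm, mem_grushinLengths_symm⟩]

lemma grushinDist_triangle (p q r : ℝ × ℝ) :
    grushinDist p r ≤ grushinDist p q + grushinDist q r := by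
  rw [grushinDist, grushinDist, grushinDist, ← csInf_add (grushinLengths_nonempty p q)
    bddBelow_grushinLengths (grushinLengths_nonempty q r) bddBelow_grushinLengths]
  refine csInf_le_csInf bddBelow_grushinLengths
    ((grushinLengths_nonempty p q).add (grushinLengths_nonempty q r)) ?_
  rintro _ ⟨L₁, h₁, L₂, h₂, rfl⟩
  exact add_mem_grushinLengths h₁ h₂

lemma exists_abs_sub_le_and_le_abs (x : ℝ) {r : ℝ} (hr : 0 ≤ r) : ∃ s, |s - x| ≤ r ∧ r ≤ |s| := by
  rcases le_total 0 x with hx | hx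
  · exact ⟨x + r, by simp [abs_of_nonneg hr], by rw [abs_of_nonneg (by positivity)]; linarith⟩
  · refine ⟨x - r, by simp [abs_of_nonneg hr], ?_⟩
    rw [abs_of_nonpos (by linarith)]
    linarith

lemma exists_grushinDist_lt_of_dist_lt (p : ℝ × ℝ) {ε : ℝ} (hε : 0 < ε) :
    ∃ δ > 0, ∀ q, dist p q < δ → grushinDist p q < ε := by
  set r := ε / 4 with hr_def
  have hr : 0 < r := by positivity
  obtain ⟨s, hsp, hs⟩ := exists_abs_sub_le_and_le_abs p.1 hr.le
  refine ⟨min r (r ^ 2), by positivity, fun q hq => ?_⟩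
  rw [Prod.dist_eq, max_lt_iff, Real.dist_eq, Real.dist_eq, lt_min_iff, lt_min_iff,
    abs_sub_comm, abs_sub_comm p.2] at hq
  have hvert : |q.2 - p.2| / |s| < r := by
    rw [div_lt_iff₀ (hr.trans_le hs)]
    nlinarith
  have hhor : |q.1 - s| < 2 * r := by
    linarith [abs_sub_le q.1 p.1 s, abs_sub_comm p.1 s]
  calc grushinDist p q ≤ |s - p.1| + |q.2 - p.2| / |s| + |q.1 - s| :=
        grushinDist_le (three_segments_mem_grushinLengths p q (abs_pos.1 (hr.trans_le hs)))
    _ < ε := by linarith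

lemma exists_dist_lt_of_grushinDist_lt (p : ℝ × ℝ) {ε : ℝ} (hε : 0 < ε) :
    ∃ δ > 0, ∀ q, grushinDist p q < δ → dist p q < ε := by
  have hp : 0 < 2 + |p.1| := by positivity
  refine ⟨min 1 (ε / (2 + |p.1|)), by positivity, fun q hq => ?_⟩
  obtain ⟨L, hL, hLδ⟩ := exists_mem_grushinLengths_lt hq
  rw [lt_min_iff] at hLδ
  have hL₀ := nonneg_of_mem_grushinLengths hL
  calc dist p q ≤ (1 + |p.1| + L) * L := dist_le_of_mem_grushinLengths hL
    _ ≤ (2 + |p.1|) * L := mul_le_mul_of_nonneg_right (by linarith) hL₀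
    _ < (2 + |p.1|) * (ε / (2 + |p.1|)) := by gcongr; exact hLδ.2
    _ = ε := mul_div_cancel₀ ε hp.ne'

lemma eq_of_grushinDist_eq_zero (h : grushinDist p q = 0) : p = q := by
  refine dist_le_zero.1 (le_of_forall_pos_lt_add fun ε hε => ?_)
  obtain ⟨δ, hδ, hδε⟩ := exists_dist_lt_of_grushinDist_lt p hε
  simpa using hδε q (h ▸ hδ)

end Distance

end Grushin

open Grushin in
/-- the Grushin distance is finite (admissible curves always exist),
defines a metric on `ℝ²`, and induces the Euclidean topology. -/
theorem grushinDist_metric_and_topology :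
    (∀ p q : ℝ × ℝ, (grushinLengths p q).Nonempty) ∧
    (∀ p q : ℝ × ℝ, 0 ≤ grushinDist p q) ∧
    (∀ p q : ℝ × ℝ, grushinDist p q = 0 ↔ p = q) ∧
    (∀ p q : ℝ × ℝ, grushinDist p q = grushinDist q p) ∧
    (∀ p q r : ℝ × ℝ, grushinDist p r ≤ grushinDist p q + grushinDist q r) ∧
    (∀ p : ℝ × ℝ, ∀ ε : ℝ, 0 < ε → ∃ δ : ℝ, 0 < δ ∧
      ∀ q : ℝ × ℝ, dist p q < δ → grushinDist p q < ε) ∧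
    (∀ p : ℝ × ℝ, ∀ ε : ℝ, 0 < ε → ∃ δ : ℝ, 0 < δ ∧
      ∀ q : ℝ × ℝ, grushinDist p q < δ → dist p q < ε) :=
  ⟨grushinLengths_nonempty, fun _ _ => grushinDist_nonneg,
    fun _ _ => ⟨eq_of_grushinDist_eq_zero, fun h => h ▸ grushinDist_self _⟩, grushinDist_comm,
    grushinDist_triangle, fun p _ => exists_grushinDist_lt_of_dist_lt p,
    fun p _ => exists_dist_lt_of_grushinDist_lt p⟩
end

section
/- Let 0 < a < 1 and consider the two solutions of the Grushin Hamiltonian system ẋ = p_x, ẏ = x²p_y, ṗ_x = −x p_y², ṗ_y = 0 with initial conditions (−1, 0, √(1−a²), a) and (−1, 0, −√(1−a²), a) (both lying on the level set H = 1/2 of H = ½(p_x² + x²p_y²)). Explicitly, their (x,y)-projections are γ^±(t) = (x^±(t), y^±(t)) with x^±(t) = −cos(at) ± (√(1−a²)/a) sin(at) and y^±(t) = ∓√(1−a²)/(2a) + t/(2a) + ((a² − (1−a²))/(4a²)) sin(2at) ± (√(1−a²)/(2a)) cos(2at). Then γ^+(π/a) = γ^−(π/a) = (1, π/(2a²)),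 while γ^+(t) ≠ γ^−(t) for every 0 < t < π/a; i.e., the two geodesics from (−1,0) with covector parameters (±√(1−a²), a) first intersect at time t = π/a at the point (1, π/(2a²)). -/
/-!
With `p_y ≡ a`, the Hamiltonian system reduces to the harmonic oscillator `ẍ = -a² x`, so every
geodesic from `(-1, 0)` with covector `(b, a)` has `x = -cos (a t) + (b / a) sin (a t)`, and `y` is
obtained by integrating `a x²`. Both curves return to `x = 1` at `t = π / a`, where the
`b`-dependent terms of `y` cancel; before that time the two `x`-coordinates differ by
`2 (b / a) sin (a t) ≠ 0`.
-/

open Real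

namespace Grushin

variable (a b : ℝ)

/-- The solution of the Grushin Hamiltonian system from `(-1, 0)` with covector `(b, a)`,
`p_y ≡ a`. -/
noncomputable def x (t : ℝ) : ℝ := -cos (a * t) + (b / a) * sin (a * t)

noncomputable def y (t : ℝ) : ℝ :=
  -(b / (2 * a)) + t / (2 * a) + ((a ^ 2 - b ^ 2) / (4 * a ^ 2)) * sin (2 * a * t)
    + (b / (2 * a)) * cos (2 * a * t)

noncomputable def px (t : ℝ) : ℝ := a * sin (a * t) + b * cos (a * t)

variable {a b}

theorem hasDerivAt_sin_const_mul (c t : ℝ) :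
    HasDerivAt (fun u => sin (c * u)) (c * cos (c * t)) t := by
  simpa [mul_comm] using ((hasDerivAt_id t).const_mul c).sin

theorem hasDerivAt_cos_const_mul (c t : ℝ) :
    HasDerivAt (fun u => cos (c * u)) (-(c * sin (c * t))) t := by
  simpa [mul_comm] using ((hasDerivAt_id t).const_mul c).cos

theorem hasDerivAt_x (ha : a ≠ 0) (t : ℝ) : HasDerivAt (x a b) (px a b t) t := by
  refine ((hasDerivAt_cos_const_mul a t).neg.add
    ((hasDerivAt_sin_const_mul a t).const_mul (b / a))).congr_deriv ?_
  simp only [px]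
  field_simp

theorem hasDerivAt_px (t : ℝ) : HasDerivAt (px a b) (-(x a b t) * a ^ 2) t := by
  refine (((hasDerivAt_sin_const_mul a t).const_mul a).add
    ((hasDerivAt_cos_const_mul a t).const_mul b)).congr_deriv ?_
  simp only [x]
  by_cases ha : a = 0
  · simp [ha]
  · field_simp
    ring

/-- The coefficient `1 / (2a)` of `t` in `y` is where `a² + b² = 1` enters. -/
theorem hasDerivAt_y (ha : a ≠ 0) (hab : a ^ 2 + b ^ 2 = 1) (t : ℝ) :
    HasDerivAt (y a b) (x a b t ^ 2 * a) t := by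
  refine ((((hasDerivAt_const t _).add ((hasDerivAt_id t).div_const (2 * a))).add
    ((hasDerivAt_sin_const_mul (2 * a) t).const_mul _)).add
    ((hasDerivAt_cos_const_mul (2 * a) t).const_mul _)).congr_deriv ?_
  simp only [x, mul_assoc, sin_two_mul, cos_two_mul]
  field_simp
  linear_combination -4 * hab - 8 * b ^ 2 * sin_sq_add_cos_sq (a * t)

theorem px_sq_add_x_sq_mul_sq (ha : a ≠ 0) (t : ℝ) :
    px a b t ^ 2 + x a b t ^ 2 * a ^ 2 = a ^ 2 + b ^ 2 := by
  simp only [px, x]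
  field_simp
  linear_combination (a ^ 2 + b ^ 2) * sin_sq_add_cos_sq (a * t)

@[simp] theorem x_zero : x a b 0 = -1 := by simp [x]

@[simp] theorem y_zero : y a b 0 = 0 := by simp [y]

@[simp] theorem px_zero : px a b 0 = b := by simp [px]

theorem x_pi_div (ha : a ≠ 0) : x a b (π / a) = 1 := by
  simp [x, mul_div_cancel₀ π ha]

theorem y_pi_div (ha : a ≠ 0) : y a b (π / a) = π / (2 * a ^ 2) := by
  have h : 2 * a * (π / a) = 2 * π := by field_simp
  simp only [y, h, sin_two_pi, cos_two_pi]
  field_simp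
  ring

theorem x_ne_x_neg (ha : 0 < a) (hb : b ≠ 0) {t : ℝ} (ht₀ : 0 < t) (ht : t < π / a) :
    x a b t ≠ x a (-b) t := by
  have hsin : 0 < sin (a * t) :=
    sin_pos_of_pos_of_lt_pi (by positivity) (by rwa [lt_div_iff₀' ha] at ht)
  have hdiff : x a b t - x a (-b) t = 2 * (b / a) * sin (a * t) := by simp only [x]; ring
  intro h
  rw [h, sub_self] at hdiff
  exact mul_ne_zero (mul_ne_zero two_ne_zero (div_ne_zero hb ha.ne')) hsin.ne' hdiff.symm

end Grushin

open Grushin in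
/-- the two Grushin geodesics from the Riemannian point `(−1, 0)` with
initial covectors `(±√(1−a²), a)`, `0 < a < 1`, solve the Hamiltonian system
`ẋ = p_x, ẏ = x²p_y, ṗ_x = −x p_y², ṗ_y = 0` on the level set `H = 1/2`, and they first
intersect at time `t = π/a`, at the point `(1, π/(2a²))`. -/
theorem grushin_geodesics_from_riemannian_point (a : ℝ) (ha0 : 0 < a) (ha1 : a < 1)
    (xp xm yp ym pxp pxm py : ℝ → ℝ)
    (hxp : xp = fun t => -cos (a * t) + (Real.sqrt (1 - a ^ 2) / a) * sin (a * t))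
    (hxm : xm = fun t => -cos (a * t) - (Real.sqrt (1 - a ^ 2) / a) * sin (a * t))
    (hyp : yp = fun t => -(Real.sqrt (1 - a ^ 2) / (2 * a)) + t / (2 * a)
      + ((a ^ 2 - (1 - a ^ 2)) / (4 * a ^ 2)) * sin (2 * a * t)
      + (Real.sqrt (1 - a ^ 2) / (2 * a)) * cos (2 * a * t))
    (hym : ym = fun t => Real.sqrt (1 - a ^ 2) / (2 * a) + t / (2 * a)
      + ((a ^ 2 - (1 - a ^ 2)) / (4 * a ^ 2)) * sin (2 * a * t)
      - (Real.sqrt (1 - a ^ 2) / (2 * a)) * cos (2 * a * t))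
    (hpxp : pxp = fun t => a * sin (a * t) + Real.sqrt (1 - a ^ 2) * cos (a * t))
    (hpxm : pxm = fun t => a * sin (a * t) - Real.sqrt (1 - a ^ 2) * cos (a * t))
    (hpy : py = fun _ => a) :
    -- both curves solve the Grushin Hamiltonian system
    (∀ t, HasDerivAt xp (pxp t) t) ∧
    (∀ t, HasDerivAt yp ((xp t) ^ 2 * py t) t) ∧
    (∀ t, HasDerivAt pxp (-(xp t) * (py t) ^ 2) t) ∧
    (∀ t, HasDerivAt xm (pxm t) t) ∧
    (∀ t, HasDerivAt ym ((xm t) ^ 2 * py t) t) ∧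
    (∀ t, HasDerivAt pxm (-(xm t) * (py t) ^ 2) t) ∧
    (∀ t, HasDerivAt py 0 t) ∧
    -- initial conditions `(−1, 0, ±√(1−a²), a)`
    xp 0 = -1 ∧ yp 0 = 0 ∧ pxp 0 = Real.sqrt (1 - a ^ 2) ∧
    xm 0 = -1 ∧ ym 0 = 0 ∧ pxm 0 = -Real.sqrt (1 - a ^ 2) ∧
    -- both lie on the level set `H = 1/2`
    (∀ t, (1 / 2) * ((pxp t) ^ 2 + (xp t) ^ 2 * (py t) ^ 2) = 1 / 2) ∧
    (∀ t, (1 / 2) * ((pxm t) ^ 2 + (xm t) ^ 2 * (py t) ^ 2) = 1 / 2) ∧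
    -- first intersection at time `π/a` at the point `(1, π/(2a²))`
    ((xp (π / a), yp (π / a)) : ℝ × ℝ) = (1, π / (2 * a ^ 2)) ∧
    ((xm (π / a), ym (π / a)) : ℝ × ℝ) = (1, π / (2 * a ^ 2)) ∧
    (∀ t : ℝ, 0 < t → t < π / a → ((xp t, yp t) : ℝ × ℝ) ≠ (xm t, ym t)) := by
  have ha : a ≠ 0 := ha0.ne'
  set s := √(1 - a ^ 2)
  have hs : s ^ 2 = 1 - a ^ 2 := sq_sqrt (by nlinarith)
  have hs₀ : s ≠ 0 := (sqrt_pos.mpr (by nlinarith)).ne'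
  have hab : a ^ 2 + s ^ 2 = 1 := by linarith
  have hab' : a ^ 2 + (-s) ^ 2 = 1 := by rwa [neg_sq]
  obtain rfl : xp = x a s := hxp
  obtain rfl : yp = y a s := by rw [hyp, ← hs]; rfl
  obtain rfl : pxp = px a s := hpxp
  obtain rfl : xm = x a (-s) := by rw [hxm]; funext t; simp only [x]; ring
  obtain rfl : ym = y a (-s) := by rw [hym, ← hs]; funext t; simp only [y]; ring
  obtain rfl : pxm = px a (-s) := by rw [hpxm]; funext t; simp only [px]; ring
  subst hpy
  have hH : ∀ b t, (1 / 2) * (px a b t ^ 2 + x a b t ^ 2 * a ^ 2) = (1 / 2) * (a ^ 2 + b ^ 2) :=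
    fun b t => by rw [px_sq_add_x_sq_mul_sq ha]
  refine ⟨hasDerivAt_x ha, hasDerivAt_y ha hab, hasDerivAt_px, hasDerivAt_x ha,
    hasDerivAt_y ha hab', hasDerivAt_px, fun t => hasDerivAt_const t a, x_zero, y_zero, px_zero,
    x_zero, y_zero, px_zero, fun t => by rw [hH, hab, mul_one], fun t => by rw [hH, hab', mul_one],
    by rw [x_pi_div ha, y_pi_div ha], by rw [x_pi_div ha, y_pi_div ha],
    fun t ht₀ ht h => x_ne_x_neg ha0 hs₀ ht₀ ht (congrArg Prod.fst h)⟩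
end
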